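/- Let S/R be a separable ring extension with separability element x = Σ_j s_j ⊗ t_j ∈ S ⊗_R S, and let M be a left S-module. If M is projective as a left R-module, then M is projective as a left S-module. -/

import Mathlib

universe u

/-- `(a, b)` encodes a separability element `Σᵢ aᵢ ⊗ bᵢ ∈ S ⊗_R S` for the extension `S/R`:
`Σᵢ aᵢ bᵢ = 1` and `s • x = x • s` for all `s ∈ S`, the tensor equality being expressed via
all `R`-balanced biadditive maps into abelian groups. -/
def IsSepElt {S : Type*} [Ring S] (R : AddSubgroup S) {n : ℕ} (a b : Fin n → S) : Prop :=
  (∑ i, a i * b i) = 1 ∧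
    ∀ (M : Type u) [AddCommGroup M] (φ : S → S → M),
      (∀ x x' y : S, φ (x + x') y = φ x y + φ x' y) →
      (∀ x y y' : S, φ x (y + y') = φ x y + φ x y') →
      (∀ r ∈ R, ∀ x y : S, φ (x * r) y = φ x (r * y)) →
      ∀ s : S, (∑ i, φ (s * a i) (b i)) = ∑ i, φ (a i) (b i * s)

/-- The ring extension `S/R` is separable: there exists a separability element. -/
def IsSepExt {S : Type*} [Ring S] (R : AddSubgroup S) : Prop :=
  ∃ (n : ℕ) (a b : Fin n → S), IsSepElt.{u} R a b

/-!
If `e = Σᵢ aᵢ ⊗ bᵢ` is a separability element, any `R`-linear map `g` between `S`-modules can be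
averaged to the `S`-linear map `m ↦ Σᵢ aᵢ • g (bᵢ • m)`, because `s e = e s`. Averaging an
`R`-linear section of the `S`-linear surjection `(M →₀ S) → M` gives an `S`-linear section, since
`Σᵢ aᵢ bᵢ = 1`; so `M` is a direct summand of a free `S`-module.
-/

namespace IsSepElt

variable {S : Type*} [Ring S] {R : AddSubgroup S} {n : ℕ} {a b : Fin n → S}

/-- Points of an abelian group are separated by characters into `ℚ ⧸ ℤ`, which can be lifted to
any universe. -/
theorem univ_change (hsep : IsSepElt.{u} R a b) : IsSepElt.{v} R a b := by
  refine ⟨hsep.1, fun A _ φ h₁ h₂ h₃ s => ?_⟩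
  rw [← sub_eq_zero, ← Finset.sum_sub_distrib]
  refine CharacterModule.eq_zero_of_character_apply fun c => ?_
  have key := congrArg AddEquiv.ulift <| hsep.2 (ULift.{u} (AddCircle (1 : ℚ)))
    (fun x y => AddEquiv.ulift.symm (c (φ x y)))
    (fun x x' y => by rw [h₁, map_add, map_add])
    (fun x y y' => by rw [h₂, map_add, map_add])
    (fun r hr x y => by rw [h₃ r hr]) s
  simpa only [map_sum, map_sub, AddEquiv.apply_symm_apply, Finset.sum_sub_distrib, sub_eq_zero]
    using key

section averageMap

variable {R : Subring S} (hsep : IsSepElt.{u} R.toAddSubgroup a b)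
  {M N P : Type*} [AddCommGroup M] [Module S M] [AddCommGroup N] [Module S N]
  [AddCommGroup P] [Module S P]

def averageMap (g : M →ₗ[R] N) : M →ₗ[S] N where
  toFun m := ∑ i, a i • g (b i • m)
  map_add' m m' := by simp only [smul_add, map_add, Finset.sum_add_distrib]
  map_smul' s m := by
    have key := hsep.univ_change.2 N (fun x y => x • g (y • m))
      (fun x x' y => add_smul x x' _)
      (fun x y y' => by simp only [add_smul, map_add, smul_add])
      (fun r hr x y => by
        simp only [mul_smul x r, mul_smul r y m]
        exact congrArg (x • ·) (g.map_smul ⟨r, hr⟩ (y • m)).symm) s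
    calc ∑ i, a i • g (b i • s • m) = ∑ i, a i • g ((b i * s) • m) := by simp only [mul_smul]
      _ = ∑ i, (s * a i) • g (b i • m) := key.symm
      _ = s • ∑ i, a i • g (b i • m) := by simp only [Finset.smul_sum, mul_smul]

theorem averageMap_apply (g : M →ₗ[R] N) (m : M) :
    hsep.averageMap g m = ∑ i, a i • g (b i • m) :=
  rfl

theorem averageMap_restrictScalars (f : M →ₗ[S] N) :
    hsep.averageMap (f.restrictScalars R) = f := by
  ext m
  simp only [averageMap_apply, LinearMap.restrictScalars_apply, map_smul, ← mul_smul,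
    ← Finset.sum_smul, hsep.1, one_smul]

theorem comp_averageMap (f : N →ₗ[S] P) (g : M →ₗ[R] N) :
    f ∘ₗ hsep.averageMap g = hsep.averageMap (f.restrictScalars R ∘ₗ g) := by
  ext m
  simp only [LinearMap.comp_apply, averageMap_apply, map_sum, map_smul,
    LinearMap.restrictScalars_apply]

end averageMap

end IsSepElt

/-- If `S/R` is a separable ring extension with separability element `Σⱼ sⱼ ⊗ tⱼ`, and
`M` is a left `S`-module which is projective as a left `R`-module (by restriction of
scalars), then `M` is projective as a left `S`-module. -/
theorem projective_of_separable_of_restriction_projective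
    {S : Type*} [Ring S] (R : Subring S) {n : ℕ} (a b : Fin n → S)
    (hsep : IsSepElt.{u} R.toAddSubgroup a b)
    (M : Type*) [AddCommGroup M] [Module S M]
    (hproj : Module.Projective R M) :
    Module.Projective S M := by
  let π : (M →₀ S) →ₗ[S] M := Finsupp.linearCombination S id
  obtain ⟨σ, hσ⟩ := Module.projective_lifting_property (π.restrictScalars R) .id
    (Finsupp.linearCombination_id_surjective S M)
  refine Module.Projective.of_split (hsep.averageMap σ) π ?_
  rw [hsep.comp_averageMap, hσ]
  exact hsep.averageMap_restrictScalars .id
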